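/- arXiv:2011.10497 — 4 statements merged into one kernel-verified Lean document; each statement's English description precedes it below -/
import Mathlib

section
/- Let A, B : ℕ → ℂ, let F, G : ℂ → ℂ, and let R_F, R_G > 0 be such that for every z ∈ ℂ with |z| < R_F the series Σ_{n≥0} A_n z^n converges to F(z), and for every z with |z| < R_G the series Σ_{n≥0} B_n z^n converges to G(z). Let z ∈ ℂ and r > 0 satisfy |z|/R_G < r < R_F. Then the series Σ_{n≥0} A_n B_n z^n converges and Σ_{n≥0} A_n B_n z^n = (1/(2πi)) ∮_{|u|=r} F(u) · G(z/u) · (1/u) du, where the integral is taken over the positively oriented circle of radius r centered at 0. -/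
/-!
Expand `F u * G (z / u) / u = Σₙ Σₘ Aₙ Bₘ zᵐ uⁿ⁻ᵐ⁻¹` on the circle `|u| = r`. The choice of `r`
makes both `Σ ‖Aₙ‖ rⁿ` and `Σ ‖Bₘ‖ (‖z‖/r)ᵐ` converge, so the double series is dominated by a
summable constant sequence and may be integrated termwise. Since `∮ uᵏ du = 2πi` for `k = -1`
and `0` otherwise, only the diagonal `n = m` survives, leaving `2πi Σ Aₙ Bₙ zⁿ`.
-/

open Complex MeasureTheory Metric

theorem summable_norm_mul_pow_of_summable {𝕜 : Type*} [NormedDivisionRing 𝕜] {C : ℕ → 𝕜}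
    {w : 𝕜} (h : Summable fun n => C n * w ^ n) {s : ℝ} (hs : 0 ≤ s) (hsw : s < ‖w‖) :
    Summable fun n => ‖C n‖ * s ^ n := by
  have hw : 0 < ‖w‖ := hs.trans_lt hsw
  obtain ⟨M, hM⟩ := h.tendsto_atTop_zero.norm.bddAbove_range
  refine .of_nonneg_of_le (fun n => by positivity) (fun n => ?_)
    ((summable_geometric_of_lt_one (by positivity) ((div_lt_one hw).2 hsw)).mul_left M)
  calc ‖C n‖ * s ^ n = ‖C n * w ^ n‖ * (s / ‖w‖) ^ n := by
        rw [norm_mul, norm_pow, div_pow]; field_simp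
    _ ≤ M * (s / ‖w‖) ^ n := by gcongr; exact hM ⟨n, rfl⟩

theorem summable_norm_mul_pow_of_forall_summable {𝕜 : Type*} [RCLike 𝕜] {C : ℕ → 𝕜} {R : ℝ}
    (h : ∀ w : 𝕜, ‖w‖ < R → Summable fun n => C n * w ^ n) {s : ℝ} (hs : 0 ≤ s) (hsR : s < R) :
    Summable fun n => ‖C n‖ * s ^ n := by
  have hmid : ‖(((s + R) / 2 : ℝ) : 𝕜)‖ = (s + R) / 2 := by
    rw [RCLike.norm_ofReal, abs_of_nonneg (by linarith)]
  exact summable_norm_mul_pow_of_summable (h _ (by linarith)) hs (by linarith)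

theorem circleIntegral_sub_center_zpow (c : ℂ) {R : ℝ} (hR : R ≠ 0) (k : ℤ) :
    (∮ z in C(c, R), (z - c) ^ k) = if k = -1 then 2 * Real.pi * I else 0 := by
  split_ifs with hk
  · simpa [hk] using circleIntegral.integral_sub_center_inv c hR
  · exact circleIntegral.integral_sub_zpow_of_ne hk c c R

theorem hasSum_circleIntegral_of_dominated {ι E : Type*} [Countable ι] [NormedAddCommGroup E]
    [NormedSpace ℂ E] {f : ι → ℂ → E} {g : ℂ → E} {c : ℂ} {R : ℝ} (bound : ι → ℝ)
    (hf : ∀ i, CircleIntegrable (f i) c R) (hbound : ∀ i, ∀ u ∈ sphere c |R|, ‖f i u‖ ≤ bound i)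
    (hsum : Summable bound) (hlim : ∀ u ∈ sphere c |R|, HasSum (fun i => f i u) (g u)) :
    HasSum (fun i => ∮ u in C(c, R), f i u) (∮ u in C(c, R), g u) := by
  refine intervalIntegral.hasSum_integral_of_dominated_convergence (fun i _ => |R| * bound i)
    (fun i => (hf i).out.def'.aestronglyMeasurable) (fun i => ?_)
    (.of_forall fun _ _ => hsum.mul_left _) intervalIntegrable_const
    (.of_forall fun θ _ => (hlim _ (circleMap_mem_sphere' c R θ)).const_smul _)
  refine .of_forall fun θ _ => ?_
  rw [norm_smul, deriv_circleMap, norm_mul, norm_circleMap_zero, norm_I, mul_one]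
  exact mul_le_mul_of_nonneg_left (hbound i _ (circleMap_mem_sphere' c R θ)) (abs_nonneg R)

theorem hasSum_diag_iff {α M : Type*} [DecidableEq α] [AddCommMonoid M] [TopologicalSpace M]
    {c : α → M} {a : M} :
    HasSum (fun p : α × α => if p.1 = p.2 then c p.1 else 0) a ↔ HasSum c a := by
  have hdiag : Function.Injective fun n : α => (n, n) := fun _ _ h => congrArg Prod.fst h
  rw [← hdiag.hasSum_iff]
  · simp [Function.comp_def]
  · rintro ⟨n, m⟩ hnm
    exact if_neg fun h : n = m => hnm ⟨n, by rw [h]⟩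

section HadamardTerm

variable (A B : ℕ → ℂ) (z : ℂ)

noncomputable def hadamardTerm (nm : ℕ × ℕ) (u : ℂ) : ℂ :=
  A nm.1 * u ^ nm.1 * (B nm.2 * (z / u) ^ nm.2) / u

variable {A B z}

theorem norm_hadamardTerm {u : ℂ} {r : ℝ} (hu : ‖u‖ = r) (nm : ℕ × ℕ) :
    ‖hadamardTerm A B z nm u‖ = ‖A nm.1‖ * r ^ nm.1 * (‖B nm.2‖ * (‖z‖ / r) ^ nm.2) / r := by
  simp [hadamardTerm, norm_pow, hu]

theorem hasSum_hadamardTerm {u a b : ℂ} {r : ℝ} (hu : ‖u‖ = r)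
    (hA : HasSum (fun n => A n * u ^ n) a) (hB : HasSum (fun m => B m * (z / u) ^ m) b)
    (hA' : Summable fun n => ‖A n‖ * r ^ n) (hB' : Summable fun m => ‖B m‖ * (‖z‖ / r) ^ m) :
    HasSum (fun nm => hadamardTerm A B z nm u) (a * b / u) := by
  have hA'' : Summable fun n => ‖A n * u ^ n‖ := by simpa [norm_pow, hu] using hA'
  have hB'' : Summable fun m => ‖B m * (z / u) ^ m‖ := by simpa [norm_pow, hu] using hB'
  have hsum := summable_mul_of_summable_norm hA'' hB''
  exact (hA.mul hB hsum).div_const u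

theorem circleIntegrable_hadamardTerm {r : ℝ} (hr : r ≠ 0) (nm : ℕ × ℕ) :
    CircleIntegrable (hadamardTerm A B z nm) 0 r := by
  refine ContinuousOn.circleIntegrable' ?_
  have hu : ∀ u ∈ sphere (0 : ℂ) |r|, u ≠ 0 := fun u hu => ne_of_mem_sphere hu (abs_ne_zero.2 hr)
  unfold hadamardTerm
  fun_prop (disch := assumption)

theorem circleIntegral_hadamardTerm {r : ℝ} (hr : 0 < r) (nm : ℕ × ℕ) :
    (∮ u in C(0, r), hadamardTerm A B z nm u) =
      if nm.1 = nm.2 then 2 * Real.pi * I * (A nm.1 * B nm.1 * z ^ nm.1) else 0 := by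
  obtain ⟨n, m⟩ := nm
  have hpow : Set.EqOn (hadamardTerm A B z (n, m))
      (fun u => A n * B m * z ^ m * (u - 0) ^ ((n : ℤ) - m - 1)) (sphere 0 r) := by
    intro u hu
    have hu0 : u ≠ 0 := ne_of_mem_sphere hu hr.ne'
    simp only [hadamardTerm, div_pow, sub_zero, zpow_sub₀ hu0, zpow_one, zpow_natCast]
    field_simp
  have hexp : (n : ℤ) - m - 1 = -1 ↔ n = m := by omega
  rw [circleIntegral.integral_congr hr.le hpow, circleIntegral.integral_const_mul,
    circleIntegral_sub_center_zpow 0 hr.ne']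
  simp only [hexp]
  split_ifs with h
  · subst h; ring
  · rw [mul_zero]

end HadamardTerm

theorem hadamard_convolution_formula_general
    (A B : ℕ → ℂ) (F G : ℂ → ℂ) (R_F R_G : ℝ) (hRG : 0 < R_G)
    (hF : ∀ w : ℂ, ‖w‖ < R_F → HasSum (fun n : ℕ => A n * w ^ n) (F w))
    (hG : ∀ w : ℂ, ‖w‖ < R_G → HasSum (fun n : ℕ => B n * w ^ n) (G w))
    (z : ℂ) (r : ℝ) (hr₁ : ‖z‖ / R_G < r) (hr₂ : r < R_F) :
    HasSum (fun n : ℕ => A n * B n * z ^ n)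
      ((2 * Real.pi * Complex.I)⁻¹ * ∮ u in C(0, r), F u * G (z / u) / u) := by
  have hr : 0 < r := (div_nonneg (norm_nonneg z) hRG.le).trans_lt hr₁
  have hzr : ‖z‖ / r < R_G := by
    rw [div_lt_iff₀ hr]; rw [div_lt_iff₀ hRG] at hr₁; linarith
  have hA := summable_norm_mul_pow_of_forall_summable (fun w hw => (hF w hw).summable) hr.le hr₂
  have hB := summable_norm_mul_pow_of_forall_summable (fun w hw => (hG w hw).summable)
    (div_nonneg (norm_nonneg z) hr.le) hzr
  have hnorm : ∀ u ∈ sphere (0 : ℂ) |r|, ‖u‖ = r := fun u hu => by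
    simpa [abs_of_pos hr] using hu
  have hbound : Summable fun nm : ℕ × ℕ =>
      ‖A nm.1‖ * r ^ nm.1 * (‖B nm.2‖ * (‖z‖ / r) ^ nm.2) / r :=
    (hA.mul_of_nonneg hB (fun _ => by positivity) (fun _ => by positivity)).div_const r
  have hexp : ∀ u ∈ sphere (0 : ℂ) |r|,
      HasSum (fun nm => hadamardTerm A B z nm u) (F u * G (z / u) / u) := fun u hu =>
    hasSum_hadamardTerm (hnorm u hu) (hF u (by rw [hnorm u hu]; exact hr₂))
      (hG _ (by rw [norm_div, hnorm u hu]; exact hzr)) hA hB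
  have hint := hasSum_circleIntegral_of_dominated _ (circleIntegrable_hadamardTerm hr.ne')
    (fun nm u hu => (norm_hadamardTerm (hnorm u hu) nm).le) hbound hexp
  simp only [circleIntegral_hadamardTerm hr] at hint
  have hdiag := hasSum_diag_iff (c := fun n => 2 * Real.pi * I * (A n * B n * z ^ n)) |>.1 hint
  simpa only [inv_mul_cancel_left₀ two_pi_I_ne_zero] using hdiag.mul_left (2 * Real.pi * I)⁻¹

/-- **Plancherel–Hadamard convolution formula.** If `F` is the sum of the power series
`Σ Aₙ zⁿ` on `|z| < R_F` and `G` is the sum of `Σ Bₙ zⁿ` on `|z| < R_G`, then for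
`|z|/R_G < r < R_F` the Hadamard product series `Σ Aₙ Bₙ zⁿ` converges to
`(1/(2πi)) ∮_{|u|=r} F(u) G(z/u) du/u`. -/
theorem hadamard_convolution_formula
    (A B : ℕ → ℂ) (F G : ℂ → ℂ) (R_F R_G : ℝ) (hRF : 0 < R_F) (hRG : 0 < R_G)
    (hF : ∀ w : ℂ, ‖w‖ < R_F → HasSum (fun n : ℕ => A n * w ^ n) (F w))
    (hG : ∀ w : ℂ, ‖w‖ < R_G → HasSum (fun n : ℕ => B n * w ^ n) (G w))
    (z : ℂ) (r : ℝ) (hr₁ : ‖z‖ / R_G < r) (hr₂ : r < R_F) :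
    HasSum (fun n : ℕ => A n * B n * z ^ n)
      ((2 * Real.pi * Complex.I)⁻¹ * ∮ u in C(0, r), F u * G (z / u) / u) :=
  hadamard_convolution_formula_general A B F G R_F R_G hRG hF hG z r hr₁ hr₂
end

section
/- For every real z with 0 ≤ z < 1: (2/π) ∫_0^1 du/√((1−u²)(1−z·u²)) = Σ_{n≥0} ((2n−1)!!/(2n)!!)² zⁿ. Equivalently, the complete elliptic integral ∫_0^1 du/√((1−u²)(1−z u²)) equals (π/2) times the Hadamard product of the series of (1−z)^{−1/2} with itself. -/
/-!
Substituting `u = sin θ` turns the integral into `∫_0^{π/2} (1 - z sin²θ)^{-1/2} dθ`. The binomial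
series `(1 - x)^{-1/2} = Σ ((2n-1)‼/(2n)‼) xⁿ` converges uniformly in `θ` at `x = z sin²θ`, since
`|z sin²θ| ≤ z < 1`, so it may be integrated term by term; Wallis' formula
`∫_0^{π/2} sin^{2n} θ dθ = (π/2) (2n-1)‼/(2n)‼` then squares each coefficient.
-/

open Nat Real Set intervalIntegral

theorem doubleFactorial_ratio_succ (n : ℕ) :
    ((2 * (n + 1) - 1)‼ : ℝ) / (2 * (n + 1))‼ =
      ((2 * n - 1)‼ : ℝ) / (2 * n)‼ * ((2 * n + 1) / (2 * n + 2)) := by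
  rw [show 2 * (n + 1) - 1 = 2 * n + 1 by omega, show 2 * (n + 1) = 2 * n + 2 by omega,
    Nat.doubleFactorial_add_one, Nat.doubleFactorial_add_two]
  push_cast
  field_simp

theorem Ring.multichoose_one_half (n : ℕ) :
    Ring.multichoose (1 / 2 : ℝ) n = ((2 * n - 1)‼ : ℝ) / (2 * n)‼ := by
  have hfac (n : ℕ) :
      (n ! : ℝ) * Ring.multichoose (1 / 2 : ℝ) n = (ascPochhammer ℝ n).eval (1 / 2) := by
    rw [← nsmul_eq_mul, Ring.factorial_nsmul_multichoose_eq_ascPochhammer,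
      Polynomial.ascPochhammer_smeval_eq_eval]
  induction n with
  | zero => simp
  | succ n ih =>
    have h := hfac (n + 1)
    rw [ascPochhammer_succ_eval, ← hfac n, Nat.factorial_succ] at h
    rw [doubleFactorial_ratio_succ, ← ih]
    push_cast at h
    have hrec : ((n : ℝ) + 1) * Ring.multichoose (1 / 2 : ℝ) (n + 1) =
        Ring.multichoose (1 / 2 : ℝ) n * (1 / 2 + n) :=
      mul_left_cancel₀ (Nat.cast_ne_zero.mpr n.factorial_ne_zero) (by linear_combination h)
    field_simp
    linear_combination 2 * hrec

theorem hasSum_doubleFactorial_ratio_mul_pow {x : ℝ} (hx : |x| < 1) :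
    HasSum (fun n : ℕ => ((2 * n - 1)‼ : ℝ) / (2 * n)‼ * x ^ n) (1 / √(1 - x)) := by
  have h := (Real.one_div_one_sub_rpow_hasFPowerSeriesOnBall_zero (1 / 2)).hasSum
    (y := x) (by simpa [enorm_eq_nnnorm, ← NNReal.coe_lt_coe] using hx)
  simpa only [FormalMultilinearSeries.ofScalars_apply_eq, ← Ring.multichoose_eq,
    Ring.multichoose_one_half, ← Real.sqrt_eq_rpow, zero_add, smul_eq_mul] using h

theorem integral_sin_pow_even_zero_pi_div_two (n : ℕ) :
    ∫ θ in 0..π / 2, sin θ ^ (2 * n) = π / 2 * (((2 * n - 1)‼ : ℝ) / (2 * n)‼) := by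
  induction n with
  | zero => simp
  | succ n ih =>
    rw [doubleFactorial_ratio_succ, mul_add_one, integral_sin_pow, ih]
    rw [sin_zero, cos_pi_div_two, zero_pow (succ_ne_zero _)]
    push_cast
    ring

theorem integral_div_sqrt_one_sub_sq_eq_integral_sin (g : ℝ → ℝ) :
    ∫ u in 0..1, g u / √(1 - u ^ 2) = ∫ θ in 0..π / 2, g (sin θ) := calc
  _ = ∫ u in 0..1, ((g ∘ sin) ∘ arcsin) u * (1 / √(1 - u ^ 2)) := by
    refine integral_congr fun u hu => ?_
    rw [uIcc_of_le zero_le_one] at hu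
    simp [sin_arcsin (by linarith [hu.1]) hu.2, div_eq_mul_inv]
  _ = ∫ θ in arcsin 0..arcsin 1, g (sin θ) :=
    integral_comp_mul_deriv_of_deriv_nonneg (g := g ∘ sin) continuous_arcsin.continuousOn
      (fun u hu => by
        obtain ⟨h0, h1⟩ : 0 < u ∧ u < 1 := by simpa using hu
        exact hasDerivAt_arcsin (by linarith) h1.ne)
      (fun _ _ => by positivity)
  _ = ∫ θ in 0..π / 2, g (sin θ) := by simp

theorem hasSum_intervalIntegral_powerSeries_comp {a : ℕ → ℝ} {p f : ℝ → ℝ} {r α β : ℝ}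
    (hp : Continuous p) (hpr : ∀ θ ∈ uIcc α β, |p θ| ≤ r)
    (ha : Summable fun n => |a n| * r ^ n)
    (hf : ∀ θ ∈ uIcc α β, HasSum (fun n => a n * p θ ^ n) (f θ)) :
    HasSum (fun n => a n * ∫ θ in α..β, p θ ^ n) (∫ θ in α..β, f θ) := by
  have hr : 0 ≤ r := (abs_nonneg _).trans (hpr α left_mem_uIcc)
  let G (n : ℕ) : C(ℝ, ℝ) := ⟨fun θ => a n * p θ ^ n, by fun_prop⟩
  have hG : Summable fun n =>
      ‖(G n).restrict (⟨uIcc α β, isCompact_uIcc⟩ : TopologicalSpace.Compacts ℝ)‖ := by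
    refine ha.of_nonneg_of_le (fun n => norm_nonneg _) fun n => ?_
    refine ((G n).restrict _).norm_le (by positivity) |>.mpr fun ⟨θ, hθ⟩ => ?_
    simp only [ContinuousMap.restrict_apply, G, ContinuousMap.coe_mk, norm_mul, norm_pow,
      Real.norm_eq_abs]
    gcongr
    exact hpr θ hθ
  have h := hasSum_intervalIntegral_of_summable_norm hG
  simp only [G, ContinuousMap.coe_mk, intervalIntegral.integral_const_mul] at h
  rwa [integral_congr fun θ hθ => (hf θ hθ).tsum_eq] at h

/-- The complete elliptic integral as the Hadamard square of the binomial series: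
for `0 ≤ z < 1`,
`(2/π) ∫_0^1 du/√((1−u²)(1−z u²)) = Σ_{n≥0} ((2n−1)‼/(2n)‼)² zⁿ`. -/
theorem elliptic_integral_hadamard_square (z : ℝ) (h0 : 0 ≤ z) (h1 : z < 1) :
    HasSum (fun n : ℕ => (((2 * n - 1)‼ : ℝ) / ((2 * n)‼ : ℝ)) ^ 2 * z ^ n)
      (2 / Real.pi * ∫ u in (0:ℝ)..1, 1 / Real.sqrt ((1 - u ^ 2) * (1 - z * u ^ 2))) := by
  have hseries (x : ℝ) (hx : |x| ≤ z) :
      HasSum (fun n : ℕ => ((2 * n - 1)‼ : ℝ) / (2 * n)‼ * x ^ n) (1 / √(1 - x)) :=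
    hasSum_doubleFactorial_ratio_mul_pow (hx.trans_lt h1)
  have hsummable : Summable fun n : ℕ => |((2 * n - 1)‼ : ℝ) / (2 * n)‼| * z ^ n :=
    (hseries z (abs_of_nonneg h0).le).summable.congr fun n => by
      rw [abs_of_nonneg (by positivity)]
  have hbound (θ : ℝ) : |z * sin θ ^ 2| ≤ z := by
    rw [abs_of_nonneg (by positivity)]
    nlinarith [sin_sq_le_one θ]
  have hterms := hasSum_intervalIntegral_powerSeries_comp (α := 0) (β := π / 2)
    (p := fun θ => z * sin θ ^ 2) (by fun_prop) (fun θ _ => hbound θ) hsummable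
    (fun θ _ => hseries _ (hbound θ))
  have hsubst : ∫ u in (0:ℝ)..1, 1 / √((1 - u ^ 2) * (1 - z * u ^ 2)) =
      ∫ θ in 0..π / 2, 1 / √(1 - z * sin θ ^ 2) := by
    rw [← integral_div_sqrt_one_sub_sq_eq_integral_sin fun u => 1 / √(1 - z * u ^ 2)]
    refine integral_congr fun u hu => ?_
    rw [uIcc_of_le zero_le_one] at hu
    rw [sqrt_mul (by nlinarith [hu.1, hu.2]), div_div, mul_comm]
  rw [hsubst]
  refine (hterms.mul_left (2 / π)).congr_fun fun n => ?_
  simp only [mul_pow, ← pow_mul, intervalIntegral.integral_const_mul,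
    integral_sin_pow_even_zero_pi_div_two]
  field_simp
end

section
/- Let a, b ∈ ℂ with 0 < Re(b) < 1, and let z ∈ ℂ with |z| < 1. Then Σ_{n≥0} ((a)_n (b)_n / (n!)²) zⁿ = (1/(Γ(b)Γ(1−b))) ∫_0^1 u^{b−1} (1−u)^{−b} (1−z·u)^{−a} du, where the powers u^{b−1}, (1−u)^{−b}, (1−zu)^{−a} are principal branches (the last is well defined since 1−zu has positive real part for u ∈ [0,1]). -/
/-!
Expand `(1 - z u) ^ (-a)` by the binomial series `∑ (a)ₙ / n! (z u)ⁿ` and integrate term by term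
against the Beta weight `u ^ (b - 1) (1 - u) ^ (-b)`; this is legitimate by dominated convergence
because `‖z u‖ ≤ ‖z‖ < 1` on `[0, 1]`. The `n`-th moment of the weight is
`B(b + n, 1 - b) = Γ(b + n) Γ(1 - b) / Γ(n + 1) = (b)ₙ Γ(b) Γ(1 - b) / n!`.
-/

open Complex MeasureTheory Set
open scoped Nat Interval

theorem Ring.choose_add_sub_one_eq_ascPochhammer_div_factorial {K : Type*} [Field K] [CharZero K]
    (a : K) (n : ℕ) : Ring.choose (a + n - 1) n = (ascPochhammer K n).eval a / n ! := by
  rw [← Ring.multichoose_eq, eq_div_iff (Nat.cast_ne_zero.2 n.factorial_ne_zero), mul_comm,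
    ← nsmul_eq_mul, Ring.factorial_nsmul_multichoose_eq_ascPochhammer,
    Polynomial.ascPochhammer_smeval_eq_eval]

namespace Complex

theorem hasFPowerSeriesOnBall_one_sub_cpow_neg (a : ℂ) :
    HasFPowerSeriesOnBall (fun w ↦ (1 - w) ^ (-a))
      (.ofScalars ℂ fun n ↦ (ascPochhammer ℂ n).eval a / n !) 0 1 := by
  simpa [cpow_neg, Ring.choose_add_sub_one_eq_ascPochhammer_div_factorial]
    using one_div_one_sub_cpow_hasFPowerSeriesOnBall_zero a

theorem hasSum_ascPochhammer_div_factorial_mul_pow (a : ℂ) {w : ℂ} (hw : ‖w‖ < 1) :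
    HasSum (fun n ↦ (ascPochhammer ℂ n).eval a / n ! * w ^ n) ((1 - w) ^ (-a)) := by
  have := (hasFPowerSeriesOnBall_one_sub_cpow_neg a).hasSum (y := w)
    (by rwa [Metric.mem_eball, edist_zero_right, ← ofReal_norm, ENNReal.ofReal_lt_one])
  simpa only [FormalMultilinearSeries.ofScalars_apply_eq, smul_eq_mul, zero_add] using this

theorem summable_norm_ascPochhammer_div_factorial_mul_pow (a : ℂ) {r : ℝ} (hr0 : 0 ≤ r)
    (hr : r < 1) : Summable fun n ↦ ‖(ascPochhammer ℂ n).eval a / (n ! : ℂ)‖ * r ^ n := by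
  lift r to NNReal using hr0
  have hr_lt : (r : ENNReal) < _ :=
    lt_of_lt_of_le (by exact_mod_cast hr) (hasFPowerSeriesOnBall_one_sub_cpow_neg a).r_le
  simpa [FormalMultilinearSeries.ofScalars_norm] using
    FormalMultilinearSeries.summable_norm_mul_pow _ hr_lt

end Complex

theorem hasSum_intervalIntegral_mul_tsum_mul_pow {c : ℕ → ℂ} {z : ℂ} {w : ℝ → ℂ}
    (hc : Summable fun n ↦ ‖c n‖ * ‖z‖ ^ n) (hw : IntervalIntegrable w volume 0 1) :
    HasSum (fun n ↦ c n * z ^ n * ∫ u in (0 : ℝ)..1, w u * (u : ℂ) ^ n)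
      (∫ u in (0 : ℝ)..1, w u * ∑' n, c n * (z * u) ^ n) := by
  have hnorm_le : ∀ u ∈ Ι (0 : ℝ) 1, ∀ n : ℕ, ‖c n * (z * u) ^ n‖ ≤ ‖c n‖ * ‖z‖ ^ n := by
    intro u hu n
    rw [uIoc_of_le zero_le_one] at hu
    have hu_le : ‖(u : ℂ)‖ ≤ 1 := by
      rw [norm_real, Real.norm_of_nonneg hu.1.le]
      exact hu.2
    rw [norm_mul, norm_pow, norm_mul]
    gcongr
    exact mul_le_of_le_one_right (norm_nonneg z) hu_le
  have hterm : ∀ n, (fun u : ℝ ↦ c n * z ^ n * (w u * (u : ℂ) ^ n)) =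
      fun u ↦ w u * (c n * (z * u) ^ n) := fun n ↦ by
    ext u
    ring
  simp_rw [← intervalIntegral.integral_const_mul, hterm]
  refine intervalIntegral.hasSum_integral_of_dominated_convergence
    (fun n u ↦ ‖w u‖ * (‖c n‖ * ‖z‖ ^ n)) (fun n ↦ ?_) (fun n ↦ ?_) ?_ ?_ ?_
  · exact hw.def'.aestronglyMeasurable.mul (by fun_prop)
  · refine .of_forall fun u hu ↦ ?_
    rw [norm_mul]
    exact mul_le_mul_of_nonneg_left (hnorm_le u hu n) (norm_nonneg _)
  · exact .of_forall fun u _ ↦ hc.mul_left _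
  · simp_rw [tsum_mul_left]
    exact hw.norm.mul_const _
  · exact .of_forall fun u hu ↦ (hc.of_norm_bounded (hnorm_le u hu)).hasSum.mul_left (w u)

theorem intervalIntegral_cpow_mul_one_sub_cpow_mul_pow (s t : ℂ) (n : ℕ) :
    ∫ u in (0 : ℝ)..1, (u : ℂ) ^ (s - 1) * (1 - (u : ℂ)) ^ (t - 1) * (u : ℂ) ^ n =
      betaIntegral (s + n) t := by
  rw [betaIntegral]
  refine intervalIntegral.integral_congr_ae (.of_forall fun u hu ↦ ?_)
  rw [uIoc_of_le zero_le_one] at hu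
  rw [show s + n - 1 = s - 1 + n by ring, cpow_add _ _ (ofReal_ne_zero.2 hu.1.ne'), cpow_natCast]
  ring

namespace Complex

theorem Gamma_add_natCast {s : ℂ} (hs : 0 < s.re) (n : ℕ) :
    Gamma (s + n) = (ascPochhammer ℂ n).eval s * Gamma s := by
  have hs_ne : ∀ k : ℕ, s ≠ -k := fun k h ↦ by
    have := congrArg re h
    simp only [neg_re, natCast_re] at this
    linarith [k.cast_nonneg (α := ℝ)]
  rw [← Gamma_add_nat_div_Gamma_eq s hs_ne, div_mul_cancel₀ _ (Gamma_ne_zero_of_re_pos hs)]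

theorem betaIntegral_add_natCast_one_sub {b : ℂ} (hb0 : 0 < b.re) (hb1 : b.re < 1) (n : ℕ) :
    betaIntegral (b + n) (1 - b) =
      (ascPochhammer ℂ n).eval b / n ! * (Gamma b * Gamma (1 - b)) := by
  have h := Gamma_mul_Gamma_eq_betaIntegral (s := b + n) (t := 1 - b)
    (by simp only [add_re, natCast_re]; positivity) (by simpa)
  rw [show b + n + (1 - b) = n + 1 by ring, Gamma_nat_eq_factorial, Gamma_add_natCast hb0] at h
  rw [div_mul_eq_mul_div, eq_div_iff (Nat.cast_ne_zero.2 n.factorial_ne_zero)]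
  linear_combination -h

end Complex

/-- Euler's integral representation for `F(a,b,1;z)`: for `0 < Re b < 1` and `|z| < 1`,
`Σ_{n≥0} ((a)ₙ(b)ₙ/(n!)²) zⁿ
  = (1/(Γ(b)Γ(1−b))) ∫_0^1 u^{b−1} (1−u)^{−b} (1−zu)^{−a} du`,
all complex powers being principal branches. -/
theorem euler_integral_hypergeometric_c_one
    (a b : ℂ) (hb0 : 0 < b.re) (hb1 : b.re < 1) (z : ℂ) (hz : ‖z‖ < 1) :
    ∑' n : ℕ, (ascPochhammer ℂ n).eval a * (ascPochhammer ℂ n).eval b /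
        ((Nat.factorial n : ℂ)) ^ 2 * z ^ n =
      1 / (Complex.Gamma b * Complex.Gamma (1 - b)) *
        ∫ u in (0:ℝ)..1,
          (u : ℂ) ^ (b - 1) * (1 - (u : ℂ)) ^ (-b) * (1 - z * (u : ℂ)) ^ (-a) := by
  have h1b : 0 < (1 - b).re := by simpa using hb1
  have hweight : IntervalIntegrable (fun u : ℝ ↦ (u : ℂ) ^ (b - 1) * (1 - (u : ℂ)) ^ (-b))
      volume 0 1 := by
    simpa using betaIntegral_convergent hb0 h1b
  have hbinom : ∀ u ∈ uIcc (0 : ℝ) 1,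
      ∑' n, (ascPochhammer ℂ n).eval a / n ! * (z * u) ^ n = (1 - z * u) ^ (-a) := by
    intro u hu
    rw [uIcc_of_le zero_le_one] at hu
    refine (hasSum_ascPochhammer_div_factorial_mul_pow a ?_).tsum_eq
    rw [norm_mul, norm_real, Real.norm_of_nonneg hu.1]
    nlinarith [norm_nonneg z, hu.2]
  have hmoment : ∀ n : ℕ,
      ∫ u in (0 : ℝ)..1, (u : ℂ) ^ (b - 1) * (1 - (u : ℂ)) ^ (-b) * (u : ℂ) ^ n =
        (ascPochhammer ℂ n).eval b / n ! * (Gamma b * Gamma (1 - b)) := fun n ↦ by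
    rw [← betaIntegral_add_natCast_one_sub hb0 hb1 n,
      ← intervalIntegral_cpow_mul_one_sub_cpow_mul_pow, sub_sub_cancel_left]
  have hsum := hasSum_intervalIntegral_mul_tsum_mul_pow
    (summable_norm_ascPochhammer_div_factorial_mul_pow a (norm_nonneg z) hz) hweight
  rw [intervalIntegral.integral_congr fun u hu ↦ congrArg _ (hbinom u hu)] at hsum
  simp_rw [hmoment] at hsum
  rw [← hsum.tsum_eq, ← tsum_mul_left]
  have hΓb := Gamma_ne_zero_of_re_pos hb0
  have hΓ1b := Gamma_ne_zero_of_re_pos h1b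
  congr 1 with n
  field_simp
end

section
/- Let a, b ∈ ℂ with Re(b) > Re(a) > 0, let z ∈ ℂ, and let t : ℕ → ℂ be such that Σ_{n≥0} |t_n| |z|ⁿ < ∞. Let f : ℂ → ℂ satisfy f(w) = Σ_{n≥0} t_n wⁿ for every w with |w| ≤ |z|. Then Σ_{n≥0} ((a)_n / (b)_n) t_n zⁿ = (Γ(b)/(Γ(a)Γ(b−a))) ∫_0^1 u^{a−1} (1−u)^{b−a−1} f(z·u) du, where the powers u^{a−1} and (1−u)^{b−a−1} are principal branches. -/
/-!
Expand `f (z u)` in its power series and integrate term by term against the Beta kernel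
`u ^ (a - 1) (1 - u) ^ (b - a - 1)`; the `n`-th term gives `tₙ zⁿ B(a + n, b - a)`, and the
interchange is justified by `∑ ‖tₙ‖ ‖z‖ⁿ < ∞` since `|z u| ≤ |z|` on `[0, 1]`. Finally
`B(a + n, b - a) / B(a, b - a) = (a)ₙ / (b)ₙ`, because both `B` and `(·)ₙ` are ratios of `Γ`-values.
-/

open MeasureTheory Set

namespace Complex

lemma ne_neg_natCast_of_re_pos {s : ℂ} (hs : 0 < s.re) (k : ℕ) : s ≠ -k := by
  rintro rfl
  simp only [neg_re, natCast_re, Left.neg_pos_iff] at hs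
  exact (Nat.cast_nonneg k).not_gt hs

lemma betaIntegral_eq_Gamma_mul_Gamma_div {u v : ℂ} (hu : 0 < u.re) (hv : 0 < v.re) :
    betaIntegral u v = Gamma u * Gamma v / Gamma (u + v) := by
  have huv : Gamma (u + v) ≠ 0 := Gamma_ne_zero_of_re_pos (by rw [add_re]; positivity)
  rw [Gamma_mul_Gamma_eq_betaIntegral hu hv, mul_div_cancel_left₀ _ huv]

lemma betaIntegral_add_nat_left {a c : ℂ} (ha : 0 < a.re) (hc : 0 < c.re) (n : ℕ) :
    betaIntegral (a + n) c =
      (ascPochhammer ℂ n).eval a / (ascPochhammer ℂ n).eval (a + c) * betaIntegral a c := by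
  have hac : 0 < (a + c).re := by rw [add_re]; positivity
  have han : 0 < (a + n).re := by rw [add_re, natCast_re]; positivity
  rw [← Gamma_add_nat_div_Gamma_eq a (ne_neg_natCast_of_re_pos ha),
    ← Gamma_add_nat_div_Gamma_eq (a + c) (ne_neg_natCast_of_re_pos hac),
    betaIntegral_eq_Gamma_mul_Gamma_div han hc, betaIntegral_eq_Gamma_mul_Gamma_div ha hc,
    add_right_comm]
  have := Gamma_ne_zero_of_re_pos ha
  have := Gamma_ne_zero_of_re_pos hac
  field_simp

lemma beta_kernel_mul_pow_eqOn (a c w : ℂ) (n : ℕ) :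
    EqOn (fun u : ℝ => (u : ℂ) ^ (a - 1) * (1 - (u : ℂ)) ^ (c - 1) * (w * u) ^ n)
      (fun u : ℝ => w ^ n * ((u : ℂ) ^ (a + n - 1) * (1 - (u : ℂ)) ^ (c - 1))) (Ioc 0 1) := by
  intro u hu
  have hu0 : (u : ℂ) ≠ 0 := ofReal_ne_zero.mpr hu.1.ne'
  dsimp only
  rw [show a + n - 1 = a - 1 + n by ring, cpow_add _ _ hu0, cpow_natCast, mul_pow]
  ring

lemma integrableOn_beta_kernel_mul_pow {a c : ℂ} (ha : 0 < a.re) (hc : 0 < c.re) (w : ℂ)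
    (n : ℕ) :
    IntegrableOn (fun u : ℝ => (u : ℂ) ^ (a - 1) * (1 - (u : ℂ)) ^ (c - 1) * (w * u) ^ n)
      (Ioc 0 1) := by
  have han : 0 < (a + n).re := by rw [add_re, natCast_re]; positivity
  have hint := (betaIntegral_convergent han hc).1.const_mul (w ^ n)
  exact IntegrableOn.congr_fun hint (beta_kernel_mul_pow_eqOn a c w n).symm measurableSet_Ioc

lemma setIntegral_beta_kernel_mul_pow (a c w : ℂ) (n : ℕ) :
    ∫ u in Ioc (0 : ℝ) 1, (u : ℂ) ^ (a - 1) * (1 - (u : ℂ)) ^ (c - 1) * (w * u) ^ n =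
      w ^ n * betaIntegral (a + n) c := by
  rw [setIntegral_congr_fun measurableSet_Ioc (beta_kernel_mul_pow_eqOn a c w n),
    integral_const_mul, betaIntegral, intervalIntegral.integral_of_le zero_le_one]

theorem hasSum_integral_beta_kernel_mul {a c : ℂ} (ha : 0 < a.re) (hc : 0 < c.re) {z : ℂ}
    {t : ℕ → ℂ} (ht : Summable fun n : ℕ => ‖t n‖ * ‖z‖ ^ n) {f : ℂ → ℂ}
    (hf : ∀ w : ℂ, ‖w‖ ≤ ‖z‖ → HasSum (fun n : ℕ => t n * w ^ n) (f w)) :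
    HasSum (fun n : ℕ => t n * z ^ n * betaIntegral (a + n) c)
      (∫ u in (0 : ℝ)..1, (u : ℂ) ^ (a - 1) * (1 - (u : ℂ)) ^ (c - 1) * f (z * u)) := by
  set K : ℝ → ℂ := fun u => (u : ℂ) ^ (a - 1) * (1 - (u : ℂ)) ^ (c - 1)
  set F : ℕ → ℝ → ℂ := fun n u => t n * (K u * (z * u) ^ n)
  have hK : IntegrableOn K (Ioc 0 1) := (betaIntegral_convergent ha hc).1
  have hF : ∀ n, IntegrableOn (F n) (Ioc 0 1) := fun n =>
    (integrableOn_beta_kernel_mul_pow ha hc z n).const_mul (t n)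
  have hzu : ∀ u ∈ Ioc (0 : ℝ) 1, ‖z * u‖ ≤ ‖z‖ := fun u hu => by
    rw [norm_mul, norm_real, Real.norm_of_nonneg hu.1.le]
    exact mul_le_of_le_one_right (norm_nonneg z) hu.2
  have hF_le : ∀ n, ∀ u ∈ Ioc (0 : ℝ) 1, ‖F n u‖ ≤ ‖t n‖ * ‖z‖ ^ n * ‖K u‖ := by
    intro n u hu
    calc ‖F n u‖ = ‖t n‖ * ‖z * u‖ ^ n * ‖K u‖ := by simp only [F, norm_mul, norm_pow]; ring
      _ ≤ ‖t n‖ * ‖z‖ ^ n * ‖K u‖ := by gcongr; exact hzu u hu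
  have hF_sum : Summable fun n => ∫ u in Ioc (0 : ℝ) 1, ‖F n u‖ := by
    refine .of_nonneg_of_le (fun n => integral_nonneg fun u => norm_nonneg _) (fun n => ?_)
      (ht.mul_right (∫ u in Ioc (0 : ℝ) 1, ‖K u‖))
    rw [← integral_const_mul]
    exact setIntegral_mono_on (hF n).norm (hK.norm.const_mul _) measurableSet_Ioc (hF_le n)
  have hF_tsum : ∀ u ∈ Ioc (0 : ℝ) 1, K u * f (z * u) = ∑' n, F n u := fun u hu => by
    rw [← ((hf _ (hzu u hu)).mul_left (K u)).tsum_eq]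
    exact tsum_congr fun n => by ring
  rw [intervalIntegral.integral_of_le zero_le_one, setIntegral_congr_fun measurableSet_Ioc hF_tsum]
  refine (hasSum_integral_of_summable_integral_norm hF hF_sum).congr_fun fun n => ?_
  rw [integral_const_mul, setIntegral_beta_kernel_mul_pow, mul_assoc]

end Complex

open Complex

/-- The Beta-kernel identity underlying Euler-type integral formulas for generalized
hypergeometric series: for `Re b > Re a > 0`, if `f(w) = Σ tₙ wⁿ` for `|w| ≤ |z|` with
`Σ |tₙ||z|ⁿ < ∞`, then
`Σ_{n≥0} ((a)ₙ/(b)ₙ) tₙ zⁿ = (Γ(b)/(Γ(a)Γ(b−a))) ∫_0^1 u^{a−1} (1−u)^{b−a−1} f(zu) du`. -/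
theorem beta_kernel_euler_integral
    (a b : ℂ) (ha : 0 < a.re) (hab : a.re < b.re) (z : ℂ) (t : ℕ → ℂ)
    (ht : Summable fun n : ℕ => ‖t n‖ * ‖z‖ ^ n)
    (f : ℂ → ℂ)
    (hf : ∀ w : ℂ, ‖w‖ ≤ ‖z‖ →
      HasSum (fun n : ℕ => t n * w ^ n) (f w)) :
    ∑' n : ℕ, (ascPochhammer ℂ n).eval a / (ascPochhammer ℂ n).eval b * t n * z ^ n =
      Complex.Gamma b / (Complex.Gamma a * Complex.Gamma (b - a)) *
        ∫ u in (0:ℝ)..1,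
          (u : ℂ) ^ (a - 1) * (1 - (u : ℂ)) ^ (b - a - 1) * f (z * (u : ℂ)) := by
  have hc : 0 < (b - a).re := by rw [sub_re]; linarith
  have hB : Gamma b / (Gamma a * Gamma (b - a)) * betaIntegral a (b - a) = 1 := by
    have := Gamma_ne_zero_of_re_pos ha
    have := Gamma_ne_zero_of_re_pos hc
    have := Gamma_ne_zero_of_re_pos (ha.trans hab)
    rw [betaIntegral_eq_Gamma_mul_Gamma_div ha hc, add_sub_cancel]
    field_simp
  rw [← (hasSum_integral_beta_kernel_mul ha hc ht hf).tsum_eq, ← tsum_mul_left]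
  refine tsum_congr fun n => ?_
  rw [betaIntegral_add_nat_left ha hc, add_sub_cancel]
  linear_combination -(ascPochhammer ℂ n).eval a / (ascPochhammer ℂ n).eval b * t n * z ^ n * hB
end
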